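/- Let $p>4$, $1<q<2$. Suppose $v\neq 0$ satisfies the Nehari identity $\mu F = A + \beta\|v\|^4 - P$ and the $N^+$ inequality $(p-1)P < A + 3\beta\|v\|^4 - (q-1)\mu F$, where $A \geq \alpha\delta\|v\|^2 > 0$, $P \geq 0$, $\beta>0$. Then $P \leq \frac{2-q}{p-q}A + \frac{4-q}{p-q}\beta\|v\|^4$, and the energy $J = (\frac12-\frac1q)A + (\frac14-\frac1q)\beta\|v\|^4 + (\frac1q-\frac1p)P$ satisfies $J \leq -\frac{(2-q)(p-2)}{2pq}A - \frac{(4-q)(p-4)}{4pq}\beta\|v\|^4 < 0$. -/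

import Mathlib

/-! Substituting the Nehari identity into the `N⁺` inequality leaves
`(p - q) P < (2 - q) A + (4 - q) β‖v‖⁴`, a bound on `P` alone. The energy is then
`-(2-q)(p-2)/(2pq) A - (4-q)(p-4)/(4pq) β‖v‖⁴` plus `(1/q - 1/p)` times the slack of that bound,
and both coefficients are negative because `q < 2 < 4 < p`. -/

section NehariEnergy

variable {p q A B P : ℝ}

theorem sub_mul_lt_of_nehari_of_nplus {mF : ℝ} (hNehari : mF = A + B - P)
    (hNplus : (p - 1) * P < A + 3 * B - (q - 1) * mF) :
    (p - q) * P < (2 - q) * A + (4 - q) * B := by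
  subst hNehari
  linear_combination hNplus

theorem le_div_add_div_of_sub_mul_lt (hqp : q < p)
    (h : (p - q) * P < (2 - q) * A + (4 - q) * B) :
    P ≤ (2 - q) / (p - q) * A + (4 - q) / (p - q) * B := by
  rw [div_mul_eq_mul_div, div_mul_eq_mul_div, ← add_div, le_div_iff₀ (sub_pos.2 hqp), mul_comm]
  exact h.le

theorem energy_eq_add_mul_slack (hp : p ≠ 0) (hq : q ≠ 0) (hqp : q ≠ p) :
    (1 / 2 - 1 / q) * A + (1 / 4 - 1 / q) * B + (1 / q - 1 / p) * P
      = -((2 - q) * (p - 2) / (2 * p * q)) * A - ((4 - q) * (p - 4) / (4 * p * q)) * B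
        + (1 / q - 1 / p) * (P - ((2 - q) / (p - q) * A + (4 - q) / (p - q) * B)) := by
  have hpq : p - q ≠ 0 := sub_ne_zero.2 hqp.symm
  field_simp
  ring

theorem energy_le_of_le_div_add_div (hq : 0 < q) (hqp : q < p)
    (hPle : P ≤ (2 - q) / (p - q) * A + (4 - q) / (p - q) * B) :
    (1 / 2 - 1 / q) * A + (1 / 4 - 1 / q) * B + (1 / q - 1 / p) * P
      ≤ -((2 - q) * (p - 2) / (2 * p * q)) * A - ((4 - q) * (p - 4) / (4 * p * q)) * B := by
  have hcoef : 0 ≤ 1 / q - 1 / p := sub_nonneg.2 (one_div_le_one_div_of_le hq hqp.le)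
  rw [energy_eq_add_mul_slack (hq.trans hqp).ne' hq.ne' hqp.ne]
  have := mul_nonpos_of_nonneg_of_nonpos hcoef (sub_nonpos.2 hPle)
  linarith

theorem neg_mul_sub_neg_mul_lt_zero (hp : 4 < p) (hq : 0 < q) (hq2 : q < 2) (hA : 0 < A)
    (hB : 0 ≤ B) :
    -((2 - q) * (p - 2) / (2 * p * q)) * A - ((4 - q) * (p - 4) / (4 * p * q)) * B < 0 := by
  have hp0 : 0 < p := by linarith
  have c1 : 0 < (2 - q) * (p - 2) / (2 * p * q) := by
    apply div_pos <;> apply mul_pos <;> linarith [mul_pos hp0 hq]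
  have c2 : 0 ≤ (4 - q) * (p - 4) / (4 * p * q) := by
    apply div_nonneg <;> apply mul_nonneg <;> linarith [mul_pos hp0 hq]
  linarith [mul_pos c1 hA, mul_nonneg c2 hB]

end NehariEnergy

theorem stmt14_general {E : Type*} [NormedAddCommGroup E]
    (p q α δ β A P mF : ℝ) (v : E) (hp : 4 < p) (hq1 : 1 < q) (hq2 : q < 2)
    (hα : 0 < α) (hδ : 0 < δ) (hβ : 0 < β) (hv : v ≠ 0)
    (hA : α * δ * ‖v‖ ^ 2 ≤ A)
    (hNehari : mF = A + β * ‖v‖ ^ 4 - P)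
    (hNplus : (p - 1) * P < A + 3 * β * ‖v‖ ^ 4 - (q - 1) * mF) :
    P ≤ (2 - q) / (p - q) * A + (4 - q) / (p - q) * (β * ‖v‖ ^ 4) ∧
    (1 / 2 - 1 / q) * A + (1 / 4 - 1 / q) * (β * ‖v‖ ^ 4) + (1 / q - 1 / p) * P
      ≤ -((2 - q) * (p - 2) / (2 * p * q)) * A
        - ((4 - q) * (p - 4) / (4 * p * q)) * (β * ‖v‖ ^ 4) ∧
    (1 / 2 - 1 / q) * A + (1 / 4 - 1 / q) * (β * ‖v‖ ^ 4) + (1 / q - 1 / p) * P < 0 := by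
  have hq : 0 < q := by linarith
  have hqp : q < p := by linarith
  have hnorm : 0 < ‖v‖ := norm_pos_iff.2 hv
  have hA0 : 0 < A := lt_of_lt_of_le (by positivity) hA
  have hBound := le_div_add_div_of_sub_mul_lt hqp
    (sub_mul_lt_of_nehari_of_nplus hNehari (by linear_combination hNplus))
  have hEnergy := energy_le_of_le_div_add_div hq hqp hBound
  exact ⟨hBound, hEnergy,
    hEnergy.trans_lt (neg_mul_sub_neg_mul_lt_zero hp hq hq2 hA0 (by positivity))⟩

/-- For `v ∈ N⁺`, after eliminating the sublinear term via the
Nehari identity, `P ≤ ((2-q)/(p-q))A + ((4-q)/(p-q))β‖v‖⁴` and the energy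
`J = (1/2 - 1/q)A + (1/4 - 1/q)β‖v‖⁴ + (1/q - 1/p)P` satisfies
`J ≤ -((2-q)(p-2)/(2pq))A - ((4-q)(p-4)/(4pq))β‖v‖⁴ < 0`. -/
theorem stmt14 {E : Type*} [NormedAddCommGroup E] [NormedSpace ℝ E]
    (p q α δ β A P mF : ℝ) (v : E) (hp : 4 < p) (hq1 : 1 < q) (hq2 : q < 2)
    (hα : 0 < α) (hδ : 0 < δ) (hβ : 0 < β) (hv : v ≠ 0)
    (hA : α * δ * ‖v‖ ^ 2 ≤ A) (hP : 0 ≤ P)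
    (hNehari : mF = A + β * ‖v‖ ^ 4 - P)
    (hNplus : (p - 1) * P < A + 3 * β * ‖v‖ ^ 4 - (q - 1) * mF) :
    P ≤ (2 - q) / (p - q) * A + (4 - q) / (p - q) * (β * ‖v‖ ^ 4) ∧
    (1 / 2 - 1 / q) * A + (1 / 4 - 1 / q) * (β * ‖v‖ ^ 4) + (1 / q - 1 / p) * P
      ≤ -((2 - q) * (p - 2) / (2 * p * q)) * A
        - ((4 - q) * (p - 4) / (4 * p * q)) * (β * ‖v‖ ^ 4) ∧
    (1 / 2 - 1 / q) * A + (1 / 4 - 1 / q) * (β * ‖v‖ ^ 4) + (1 / q - 1 / p) * P < 0 :=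
  stmt14_general p q α δ β A P mF v hp hq1 hq2 hα hδ hβ hv hA hNehari hNplus
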